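/- arXiv:1806.05652 — 4 statements merged into one kernel-verified Lean document; each statement's English description precedes it below -/
import Mathlib

section
/- Every real Toeplitz matrix T admits a unique splitting T = C + S where C is a circulant matrix and S is a skew-circulant matrix; explicitly, c_{jj} = s_{jj} = t_0/2 and for j ≠ k, c_{jk} = (t_{j-k} + t_{j-k-n·sgn})/2 and s_{jk} = (t_{j-k} - t_{j-k-n·sgn})/2 where the index shift wraps modulo n (i.e., for j>k one uses t_{j-k} and t_{j-k-n}). -/
open Matrix

/-- A real matrix is circulant: its `(j,k)` entry depends only on `j - k` mod `n`. -/
def IsCirculantR (n : ℕ) (M : Matrix (Fin n) (Fin n) ℝ) : Prop :=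
  ∃ v : ℕ → ℝ, ∀ j k : Fin n,
    M j k = if (k.1 : ℕ) ≤ j.1 then v (j.1 - k.1) else v (n - (k.1 - j.1))

/-- A real matrix is skew-circulant: `s_{jk} = s_{j-k}` with `s_{-k} = -s_{n-k}`. -/
def IsSkewCirculantR (n : ℕ) (M : Matrix (Fin n) (Fin n) ℝ) : Prop :=
  ∃ v : ℕ → ℝ, ∀ j k : Fin n,
    M j k = if (k.1 : ℕ) ≤ j.1 then v (j.1 - k.1) else -v (n - (k.1 - j.1))

/-- Every real Toeplitz matrix `T = (t_{j-k})` admits a unique splitting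
`T = C + S` with `C` circulant and `S` skew-circulant; explicitly
`c_{jj} = s_{jj} = t_0/2` and for `j ≠ k`, `c_{jk} = (t_{j-k} + t_{j-k ∓ n})/2`,
`s_{jk} = (t_{j-k} - t_{j-k ∓ n})/2` (shift wrapping modulo `n`: `t_{j-k-n}` for `j > k`,
`t_{j-k+n}` for `j < k`). -/
theorem toeplitz_cscs_splitting (n : ℕ) (t : ℤ → ℝ) :
    let T : Matrix (Fin n) (Fin n) ℝ :=
      Matrix.of fun j k : Fin n => t ((j.1 : ℤ) - (k.1 : ℤ))
    let C : Matrix (Fin n) (Fin n) ℝ :=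
      Matrix.of fun j k : Fin n =>
        if j = k then t 0 / 2
        else if (k.1 : ℕ) < j.1 then
          (t ((j.1 : ℤ) - (k.1 : ℤ)) + t ((j.1 : ℤ) - (k.1 : ℤ) - (n : ℤ))) / 2
        else (t ((j.1 : ℤ) - (k.1 : ℤ)) + t ((j.1 : ℤ) - (k.1 : ℤ) + (n : ℤ))) / 2
    let S : Matrix (Fin n) (Fin n) ℝ :=
      Matrix.of fun j k : Fin n =>
        if j = k then t 0 / 2
        else if (k.1 : ℕ) < j.1 then
          (t ((j.1 : ℤ) - (k.1 : ℤ)) - t ((j.1 : ℤ) - (k.1 : ℤ) - (n : ℤ))) / 2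
        else (t ((j.1 : ℤ) - (k.1 : ℤ)) - t ((j.1 : ℤ) - (k.1 : ℤ) + (n : ℤ))) / 2
    IsCirculantR n C ∧ IsSkewCirculantR n S ∧ T = C + S ∧
      ∀ C' S' : Matrix (Fin n) (Fin n) ℝ,
        IsCirculantR n C' → IsSkewCirculantR n S' → (∀ j : Fin n, C' j j = t 0 / 2) →
          T = C' + S' → C' = C ∧ S' = S := by
  intro T C S
  have hC : IsCirculantR n C := by
    refine ⟨fun d => if d = 0 then t 0 / 2 else (t d + t ((d : ℤ) - n)) / 2, ?_⟩
    intro j k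
    show (if j = k then t 0 / 2
        else if (k.1 : ℕ) < j.1 then
          (t ((j.1 : ℤ) - (k.1 : ℤ)) + t ((j.1 : ℤ) - (k.1 : ℤ) - (n : ℤ))) / 2
        else (t ((j.1 : ℤ) - (k.1 : ℤ)) + t ((j.1 : ℤ) - (k.1 : ℤ) + (n : ℤ))) / 2) = _
    dsimp only
    rcases lt_trichotomy (j : ℕ) (k : ℕ) with h | h | h
    · have hjk : j ≠ k := by intro e; rw [e] at h; omega
      have hkn : (k : ℕ) < n := k.2
      rw [if_neg hjk, if_neg (by omega), if_neg (by omega), if_neg (by omega : ¬(n - ((k:ℕ) - (j:ℕ)) = 0))]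
      have e1 : ((n - ((k : ℕ) - (j : ℕ)) : ℕ) : ℤ) = (j : ℤ) - (k : ℤ) + n := by
        omega
      rw [e1]
      have e2 : (j : ℤ) - (k : ℤ) + n - n = (j : ℤ) - (k : ℤ) := by ring
      rw [e2]; ring
    · have hjk : j = k := Fin.ext h
      rw [if_pos hjk, if_pos (by omega : (k:ℕ) ≤ j.1), if_pos (by omega : (j:ℕ) - (k:ℕ) = 0)]
    · have hjk : j ≠ k := by intro e; rw [e] at h; omega
      rw [if_neg hjk, if_pos h, if_pos (le_of_lt h), if_neg (by omega : ¬((j:ℕ) - (k:ℕ) = 0))]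
      have e1 : (((j : ℕ) - (k : ℕ) : ℕ) : ℤ) = (j : ℤ) - (k : ℤ) := by omega
      rw [e1]
  have hS : IsSkewCirculantR n S := by
    refine ⟨fun d => if d = 0 then t 0 / 2 else (t d - t ((d : ℤ) - n)) / 2, ?_⟩
    intro j k
    show (if j = k then t 0 / 2
        else if (k.1 : ℕ) < j.1 then
          (t ((j.1 : ℤ) - (k.1 : ℤ)) - t ((j.1 : ℤ) - (k.1 : ℤ) - (n : ℤ))) / 2
        else (t ((j.1 : ℤ) - (k.1 : ℤ)) - t ((j.1 : ℤ) - (k.1 : ℤ) + (n : ℤ))) / 2) = _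
    dsimp only
    rcases lt_trichotomy (j : ℕ) (k : ℕ) with h | h | h
    · have hjk : j ≠ k := by intro e; rw [e] at h; omega
      have hkn : (k : ℕ) < n := k.2
      rw [if_neg hjk, if_neg (by omega), if_neg (by omega), if_neg (by omega : ¬(n - ((k:ℕ) - (j:ℕ)) = 0))]
      have e1 : ((n - ((k : ℕ) - (j : ℕ)) : ℕ) : ℤ) = (j : ℤ) - (k : ℤ) + n := by
        omega
      rw [e1]
      have e2 : (j : ℤ) - (k : ℤ) + n - n = (j : ℤ) - (k : ℤ) := by ring
      rw [e2]; ring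
    · have hjk : j = k := Fin.ext h
      rw [if_pos hjk, if_pos (by omega : (k:ℕ) ≤ j.1), if_pos (by omega : (j:ℕ) - (k:ℕ) = 0)]
    · have hjk : j ≠ k := by intro e; rw [e] at h; omega
      rw [if_neg hjk, if_pos h, if_pos (le_of_lt h), if_neg (by omega : ¬((j:ℕ) - (k:ℕ) = 0))]
      have e1 : (((j : ℕ) - (k : ℕ) : ℕ) : ℤ) = (j : ℤ) - (k : ℤ) := by omega
      rw [e1]
  have hTCS : T = C + S := by
    ext j k
    show t ((j.1 : ℤ) - (k.1 : ℤ)) = (if j = k then t 0 / 2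
        else if (k.1 : ℕ) < j.1 then
          (t ((j.1 : ℤ) - (k.1 : ℤ)) + t ((j.1 : ℤ) - (k.1 : ℤ) - (n : ℤ))) / 2
        else (t ((j.1 : ℤ) - (k.1 : ℤ)) + t ((j.1 : ℤ) - (k.1 : ℤ) + (n : ℤ))) / 2)
      + (if j = k then t 0 / 2
        else if (k.1 : ℕ) < j.1 then
          (t ((j.1 : ℤ) - (k.1 : ℤ)) - t ((j.1 : ℤ) - (k.1 : ℤ) - (n : ℤ))) / 2
        else (t ((j.1 : ℤ) - (k.1 : ℤ)) - t ((j.1 : ℤ) - (k.1 : ℤ) + (n : ℤ))) / 2)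
    by_cases hjk : j = k
    · subst hjk
      rw [if_pos rfl, if_pos rfl]
      have e : (j.1 : ℤ) - (j.1 : ℤ) = 0 := by ring
      rw [e]; ring
    · rw [if_neg hjk, if_neg hjk]
      by_cases h : (k.1 : ℕ) < j.1
      · rw [if_pos h, if_pos h]; ring
      · rw [if_neg h, if_neg h]; ring
  refine ⟨hC, hS, hTCS, ?_⟩
  rintro C' S' ⟨v, hv⟩ ⟨w, hw⟩ hdiag heq
  rcases Nat.eq_zero_or_pos n with hn | hn
  · subst hn
    constructor <;> (ext j k; exact j.elim0)
  have hE : ∀ j k : Fin n, t ((j.1 : ℤ) - (k.1 : ℤ)) = C' j k + S' j k := by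
    intro j k
    exact congrFun (congrFun heq j) k
  have hv0 : v 0 = t 0 / 2 := by
    have h1 := hv ⟨0, hn⟩ ⟨0, hn⟩
    rw [if_pos (le_refl _)] at h1
    simpa using (h1.symm.trans (hdiag ⟨0, hn⟩))
  have hw0 : w 0 = t 0 / 2 := by
    have h1 := hE ⟨0, hn⟩ ⟨0, hn⟩
    rw [hv ⟨0, hn⟩ ⟨0, hn⟩, hw ⟨0, hn⟩ ⟨0, hn⟩] at h1
    simp only [Fin.val_mk, Nat.sub_self, le_refl, if_true, Int.ofNat_zero, sub_self,
      Nat.cast_zero] at h1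
    rw [hv0] at h1
    linarith
  have key : ∀ d : ℕ, 0 < d → d < n →
      v d = (t d + t ((d : ℤ) - n)) / 2 ∧ w d = (t d - t ((d : ℤ) - n)) / 2 := by
    intro d hd hdn
    have h1 := hE ⟨d, hdn⟩ ⟨0, hn⟩
    rw [hv ⟨d, hdn⟩ ⟨0, hn⟩, hw ⟨d, hdn⟩ ⟨0, hn⟩] at h1
    simp only [Fin.val_mk, Nat.zero_le, if_true, Nat.sub_zero, Nat.cast_zero, sub_zero] at h1
    -- h1 : t d = v d + w d
    have h2 := hE ⟨0, hn⟩ ⟨n - d, by omega⟩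
    rw [hv ⟨0, hn⟩ ⟨n - d, by omega⟩, hw ⟨0, hn⟩ ⟨n - d, by omega⟩] at h2
    simp only [Fin.val_mk] at h2
    rw [if_neg (by omega), if_neg (by omega)] at h2
    have e1 : n - (n - d - 0) = d := by omega
    rw [e1] at h2
    have e2 : ((0 : ℕ) : ℤ) - ((n - d : ℕ) : ℤ) = (d : ℤ) - n := by omega
    rw [e2] at h2
    -- h2 : t (d - n) = v d + -(w d)
    constructor <;> linarith
  have hC' : C' = C := by
    ext j k
    rw [hv j k]
    show _ = (if j = k then t 0 / 2
        else if (k.1 : ℕ) < j.1 then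
          (t ((j.1 : ℤ) - (k.1 : ℤ)) + t ((j.1 : ℤ) - (k.1 : ℤ) - (n : ℤ))) / 2
        else (t ((j.1 : ℤ) - (k.1 : ℤ)) + t ((j.1 : ℤ) - (k.1 : ℤ) + (n : ℤ))) / 2)
    rcases lt_trichotomy (j : ℕ) (k : ℕ) with h | h | h
    · have hjk : j ≠ k := by intro e; rw [e] at h; omega
      have hkn : (k : ℕ) < n := k.2
      rw [if_neg (by omega), if_neg hjk, if_neg (by omega)]
      have hk := (key (n - ((k:ℕ) - j)) (by omega) (by omega)).1
      rw [hk]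
      have e1 : ((n - ((k : ℕ) - (j : ℕ)) : ℕ) : ℤ) = (j : ℤ) - (k : ℤ) + n := by omega
      rw [e1]
      have e2 : (j : ℤ) - (k : ℤ) + n - n = (j : ℤ) - (k : ℤ) := by ring
      rw [e2]; ring
    · have hjk : j = k := Fin.ext h
      rw [if_pos (by omega : (k:ℕ) ≤ j.1), if_pos hjk]
      have e : (j:ℕ) - (k:ℕ) = 0 := by omega
      rw [e, hv0]
    · have hjk : j ≠ k := by intro e; rw [e] at h; omega
      rw [if_pos (le_of_lt h), if_neg hjk, if_pos h]
      have hk := (key ((j:ℕ) - k) (by omega) (by omega)).1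
      rw [hk]
      have e1 : (((j : ℕ) - (k : ℕ) : ℕ) : ℤ) = (j : ℤ) - (k : ℤ) := by omega
      rw [e1]
  refine ⟨hC', ?_⟩
  have h3 : C + S = C + S' := by rw [← hTCS, heq, hC']
  exact (add_left_cancel h3).symm
end

section
/- Real Schur form of real circulant matrices: for any real circulant matrix C of order n = 2m+1, with U the orthogonal matrix built from the real and imaginary parts of the columns of F*, the matrix U^T C U is block structured: it is the direct sum (after permutation) of the 1×1 block [α_0] and 2×2 blocks [[α_k, β_k],[-β_k, α_k]] for k = 1,…,m, where λ_k = α_k + iβ_k are the eigenvalues of C. -/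
/-!
The Fourier vectors `χₖ(p) = exp (2πikp/n)` are eigenvectors of every circulant matrix:
`C χₖ = λₖ χₖ`. Since `c` is real, taking real and imaginary parts gives
`C (Re χₖ) = αₖ Re χₖ - βₖ Im χₖ` and `C (Im χₖ) = αₖ Im χₖ + βₖ Re χₖ`; the columns of `U` are
scaled copies of these vectors, so `C U = U Ω`. The orthogonality relation
`∑ₚ exp (2πikp/n) = n [n ∣ k]` makes `U` orthogonal, hence `Uᵀ C U = Uᵀ U Ω = Ω`.
-/

open Matrix Finset Real

namespace IsPrimitiveRoot

variable {K : Type*} [Field K] {n : ℕ} {ζ : K}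

theorem zpow_eq_zpow_of_dvd_sub [NeZero n] (hζ : IsPrimitiveRoot ζ n) {x y : ℤ}
    (h : (n : ℤ) ∣ x - y) : ζ ^ x = ζ ^ y := by
  have hζ0 := hζ.ne_zero (NeZero.ne n)
  rw [← div_eq_one_iff_eq (zpow_ne_zero _ hζ0), ← zpow_sub₀ hζ0]
  exact (hζ.zpow_eq_one_iff_dvd _).2 h

theorem sum_zpow_mul_val (hζ : IsPrimitiveRoot ζ n) (k : ℤ) :
    ∑ p : Fin n, ζ ^ (k * p.val) = if (n : ℤ) ∣ k then (n : K) else 0 := by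
  simp_rw [_root_.zpow_mul, zpow_natCast]
  rw [Fin.sum_univ_eq_sum_range (fun p => (ζ ^ k) ^ p)]
  split_ifs with h
  · simp [(hζ.zpow_eq_one_iff_dvd k).2 h]
  · have hζk : (ζ ^ k) ^ n = 1 := by
      rw [← zpow_natCast, ← _root_.zpow_mul, mul_comm, _root_.zpow_mul, zpow_natCast,
        hζ.pow_eq_one, _root_.one_zpow]
    rw [geom_sum_eq (mt (hζ.zpow_eq_one_iff_dvd k).1 h), hζk, sub_self, zero_div]

theorem circulant_mulVec_zpow [NeZero n] (hζ : IsPrimitiveRoot ζ n) (c : Fin n → K) (k : ℤ) :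
    circulant c *ᵥ (fun p : Fin n => ζ ^ (k * p.val)) =
      (∑ j, c j * ζ ^ (-k * j.val)) • fun p : Fin n => ζ ^ (k * p.val) := by
  ext p
  simp only [mulVec, dotProduct, circulant_apply, Pi.smul_apply, smul_eq_mul, Finset.sum_mul]
  rw [← (Equiv.subLeft p).sum_comp]
  refine Finset.sum_congr rfl fun r _ => ?_
  have hshift : ζ ^ (k * ((p - r : Fin n).val : ℤ)) = ζ ^ (-k * r.val) * ζ ^ (k * p.val) := by
    rw [← zpow_add₀ (hζ.ne_zero (NeZero.ne n))]
    refine hζ.zpow_eq_zpow_of_dvd_sub ⟨k * if r ≤ p then 0 else 1, ?_⟩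
    rw [Fin.intCast_val_sub_eq_sub_add_ite]
    split_ifs <;> ring
  simp only [Equiv.subLeft_apply, sub_sub_cancel, hshift]
  ring

end IsPrimitiveRoot

theorem Complex.exp_two_pi_mul_I_div_zpow_mul (n : ℕ) (k : ℤ) (p : ℕ) :
    exp (2 * π * I / n) ^ (k * p) = exp ((2 * π * p * k / n : ℝ) * I) := by
  rw [← exp_int_mul]
  congr 1
  push_cast
  ring

theorem Int.natCast_dvd_natCast_sub_iff_eq {n a b : ℕ} (ha : a < n) (hb : b < n) :
    (n : ℤ) ∣ (a : ℤ) - b ↔ a = b :=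
  ⟨fun h => by have := Int.eq_zero_of_abs_lt_dvd h (abs_lt.2 ⟨by omega, by omega⟩); omega,
    fun h => by simp [h]⟩

theorem Int.natCast_dvd_natCast_add_iff {n a b : ℕ} (h : a + b < n) :
    (n : ℤ) ∣ (a : ℤ) + b ↔ a = 0 ∧ b = 0 :=
  ⟨fun h' => by have := Int.eq_zero_of_abs_lt_dvd h' (abs_lt.2 ⟨by omega, by omega⟩); omega,
    fun ⟨ha, hb⟩ => by simp [ha, hb]⟩

theorem sum_mul_mul_div {ι : Type*} [Fintype ι] (a b : ℝ) (f g : ι → ℝ) :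
    ∑ q, f q * (a * (g q / b)) = a * (∑ q, f q * g q) / b := by
  rw [Finset.mul_sum, Finset.sum_div]
  refine Finset.sum_congr rfl fun q _ => ?_
  ring

theorem sum_mul_div_sqrt_mul_mul_div_sqrt {ι : Type*} [Fintype ι] {x : ℝ} (hx : 0 ≤ x)
    (a b : ℝ) (f g : ι → ℝ) :
    ∑ p, a * (f p / √x) * (b * (g p / √x)) = a * b * (∑ p, f p * g p) / x := by
  rw [Finset.mul_sum, Finset.sum_div]
  refine Finset.sum_congr rfl fun p _ => ?_
  conv_rhs => rw [← sq_sqrt hx]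
  ring

section Fourier

variable {n : ℕ} [NeZero n]

theorem sum_exp_two_pi_mul_div_mul_I (k : ℤ) :
    ∑ p : Fin n, Complex.exp ((2 * π * p * k / n : ℝ) * Complex.I) =
      if (n : ℤ) ∣ k then (n : ℂ) else 0 := by
  simp_rw [← Complex.exp_two_pi_mul_I_div_zpow_mul]
  exact (Complex.isPrimitiveRoot_exp n (NeZero.ne n)).sum_zpow_mul_val k

theorem sum_cos_two_pi_mul_div (k : ℤ) :
    ∑ p : Fin n, cos (2 * π * p * k / n) = if (n : ℤ) ∣ k then (n : ℝ) else 0 := by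
  have h := congrArg Complex.re (sum_exp_two_pi_mul_div_mul_I (n := n) k)
  simp only [Complex.re_sum, Complex.exp_ofReal_mul_I_re] at h
  rw [h]
  split_ifs <;> simp

theorem sum_sin_two_pi_mul_div (k : ℤ) :
    ∑ p : Fin n, sin (2 * π * p * k / n) = 0 := by
  have h := congrArg Complex.im (sum_exp_two_pi_mul_div_mul_I (n := n) k)
  simp only [Complex.im_sum, Complex.exp_ofReal_mul_I_im] at h
  rw [h]
  split_ifs <;> simp

theorem sum_cos_mul_cos_of_add_lt {a b : ℕ} (h : a + b < n) :
    ∑ p : Fin n, cos (2 * π * p * a / n) * cos (2 * π * p * b / n) =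
      if a = b then (if a = 0 then (n : ℝ) else n / 2) else 0 := by
  have hprod : ∑ p : Fin n, cos (2 * π * p * a / n) * cos (2 * π * p * b / n) =
      (∑ p : Fin n, cos (2 * π * p * ((a - b : ℤ) : ℝ) / n) +
        ∑ p : Fin n, cos (2 * π * p * ((a + b : ℤ) : ℝ) / n)) / 2 := by
    rw [← Finset.sum_add_distrib, Finset.sum_div]
    refine Finset.sum_congr rfl fun p _ => ?_
    push_cast [mul_add, mul_sub, add_div, sub_div, cos_add, cos_sub]
    ring
  rw [hprod, sum_cos_two_pi_mul_div, sum_cos_two_pi_mul_div]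
  simp only [Int.natCast_dvd_natCast_sub_iff_eq (n := n) (a := a) (b := b) (by omega) (by omega),
    Int.natCast_dvd_natCast_add_iff h]
  split_ifs <;> first | omega | ring

theorem sum_sin_mul_sin_of_add_lt {a b : ℕ} (h : a + b < n) :
    ∑ p : Fin n, sin (2 * π * p * a / n) * sin (2 * π * p * b / n) =
      if a = b ∧ a ≠ 0 then (n : ℝ) / 2 else 0 := by
  have hprod : ∑ p : Fin n, sin (2 * π * p * a / n) * sin (2 * π * p * b / n) =
      (∑ p : Fin n, cos (2 * π * p * ((a - b : ℤ) : ℝ) / n) -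
        ∑ p : Fin n, cos (2 * π * p * ((a + b : ℤ) : ℝ) / n)) / 2 := by
    rw [← Finset.sum_sub_distrib, Finset.sum_div]
    refine Finset.sum_congr rfl fun p _ => ?_
    push_cast [mul_add, mul_sub, add_div, sub_div, cos_add, cos_sub]
    ring
  rw [hprod, sum_cos_two_pi_mul_div, sum_cos_two_pi_mul_div]
  simp only [Int.natCast_dvd_natCast_sub_iff_eq (n := n) (a := a) (b := b) (by omega) (by omega),
    Int.natCast_dvd_natCast_add_iff h]
  split_ifs <;> first | omega | ring

theorem sum_cos_mul_sin (a b : ℕ) :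
    ∑ p : Fin n, cos (2 * π * p * a / n) * sin (2 * π * p * b / n) = 0 := by
  have hprod : ∑ p : Fin n, cos (2 * π * p * a / n) * sin (2 * π * p * b / n) =
      (∑ p : Fin n, sin (2 * π * p * ((a + b : ℤ) : ℝ) / n) -
        ∑ p : Fin n, sin (2 * π * p * ((a - b : ℤ) : ℝ) / n)) / 2 := by
    rw [← Finset.sum_sub_distrib, Finset.sum_div]
    refine Finset.sum_congr rfl fun p _ => ?_
    push_cast [mul_add, mul_sub, add_div, sub_div, sin_add, sin_sub]
    ring
  rw [hprod, sum_sin_two_pi_mul_div, sum_sin_two_pi_mul_div, sub_self, zero_div]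

noncomputable def circulantEigenvalue (c : Fin n → ℝ) (k : ℕ) : ℂ :=
  ∑ j : Fin n, (c j : ℂ) * Complex.exp (-(2 * π * Complex.I * k * j.val / n))

theorem sum_circulant_mul_exp (c : Fin n → ℝ) (k : ℕ) (p : Fin n) :
    ∑ q, (c (p - q) : ℂ) * Complex.exp ((2 * π * q * k / n : ℝ) * Complex.I) =
      circulantEigenvalue c k * Complex.exp ((2 * π * p * k / n : ℝ) * Complex.I) := by
  have h := congrFun ((Complex.isPrimitiveRoot_exp n (NeZero.ne n)).circulant_mulVec_zpow
    (fun j => (c j : ℂ)) k) p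
  simp only [mulVec, dotProduct, circulant_apply, Pi.smul_apply, smul_eq_mul,
    Complex.exp_two_pi_mul_I_div_zpow_mul, Int.cast_natCast] at h
  rw [h, circulantEigenvalue]
  congr 1
  refine Finset.sum_congr rfl fun j _ => ?_
  congr 2
  push_cast
  ring

theorem sum_circulant_mul_cos (c : Fin n → ℝ) (k : ℕ) (p : Fin n) :
    ∑ q, c (p - q) * cos (2 * π * q * k / n) =
      (circulantEigenvalue c k).re * cos (2 * π * p * k / n) -
        (circulantEigenvalue c k).im * sin (2 * π * p * k / n) := by
  have h := congrArg Complex.re (sum_circulant_mul_exp c k p)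
  simpa only [Complex.re_sum, Complex.mul_re, Complex.ofReal_re, Complex.ofReal_im, zero_mul,
    sub_zero, Complex.exp_ofReal_mul_I_re, Complex.exp_ofReal_mul_I_im] using h

theorem sum_circulant_mul_sin (c : Fin n → ℝ) (k : ℕ) (p : Fin n) :
    ∑ q, c (p - q) * sin (2 * π * q * k / n) =
      (circulantEigenvalue c k).re * sin (2 * π * p * k / n) +
        (circulantEigenvalue c k).im * cos (2 * π * p * k / n) := by
  have h := congrArg Complex.im (sum_circulant_mul_exp c k p)
  simpa only [Complex.im_sum, Complex.mul_im, Complex.ofReal_re, Complex.ofReal_im, zero_mul,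
    add_zero, Complex.exp_ofReal_mul_I_re, Complex.exp_ofReal_mul_I_im] using h

end Fourier

noncomputable def realFourierMatrix (m : ℕ) : Matrix (Fin (2 * m + 1)) (Fin (2 * m + 1)) ℝ :=
  of fun j i =>
    if i.1 ≤ m then
      (if i.1 = 0 then 1 else √2) * (cos (2 * π * j.1 * i.1 / (2 * m + 1 : ℕ)) / √(2 * m + 1 : ℕ))
    else
      √2 * (sin (2 * π * j.1 * (2 * m + 1 - i.1 : ℕ) / (2 * m + 1 : ℕ)) / √(2 * m + 1 : ℕ))

noncomputable def circulantRealSchurForm (m : ℕ) (c : Fin (2 * m + 1) → ℝ) :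
    Matrix (Fin (2 * m + 1)) (Fin (2 * m + 1)) ℝ :=
  of fun i j =>
    if i = j then (circulantEigenvalue c (min i.1 (2 * m + 1 - i.1))).re
    else if i.1 + j.1 = 2 * m + 1 then
      if i.1 ≤ m then (circulantEigenvalue c i.1).im
      else -(circulantEigenvalue c (2 * m + 1 - i.1)).im
    else 0

theorem realFourierMatrix_transpose_mul_self (m : ℕ) :
    (realFourierMatrix m)ᵀ * realFourierMatrix m = 1 := by
  ext i j
  have hi := i.isLt
  have hj := j.isLt
  simp only [mul_apply, transpose_apply, realFourierMatrix, of_apply, one_apply, ← Fin.val_inj]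
  by_cases hil : i.1 ≤ m <;> by_cases hjl : j.1 ≤ m <;> simp only [hil, hjl, if_true, if_false] <;>
    rw [sum_mul_div_sqrt_mul_mul_div_sqrt (Nat.cast_nonneg _)]
  · rw [sum_cos_mul_cos_of_add_lt (by omega)]
    split_ifs <;> first | omega | (field_simp; try simp)
  · rw [sum_cos_mul_sin, if_neg (show i.1 ≠ j.1 by omega)]
    simp
  · simp_rw [mul_comm (sin _)]
    rw [sum_cos_mul_sin, if_neg (show i.1 ≠ j.1 by omega)]
    simp
  · rw [sum_sin_mul_sin_of_add_lt (by omega)]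
    split_ifs <;> first | omega | (field_simp; try simp)

theorem circulant_mul_realFourierMatrix (m : ℕ) (c : Fin (2 * m + 1) → ℝ) :
    circulant c * realFourierMatrix m = realFourierMatrix m * circulantRealSchurForm m c := by
  ext p j
  have hj := j.isLt
  simp only [mul_apply, circulant_apply]
  rcases Nat.eq_zero_or_pos j.1 with hj0 | hj0
  · have hjl : j.1 ≤ m := by omega
    conv_rhs => rw [Fintype.sum_eq_single j fun k hk => mul_eq_zero_of_right _ (by
      simp only [circulantRealSchurForm, of_apply, if_neg hk, hj0, add_zero, k.isLt.ne, if_false])]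
    simp only [realFourierMatrix, circulantRealSchurForm, of_apply, if_pos hjl, if_pos hj0, if_true,
      sum_mul_mul_div, sum_circulant_mul_cos]
    simp only [hj0, Nat.cast_zero, mul_zero, zero_div, cos_zero, sin_zero, Nat.sub_zero,
      min_eq_left (Nat.zero_le _)]
    ring
  obtain ⟨j', hj'⟩ : ∃ j' : Fin (2 * m + 1), j'.1 = 2 * m + 1 - j.1 := ⟨⟨_, by omega⟩, rfl⟩
  have hne : j' ≠ j := Fin.ne_of_val_ne (by omega)
  conv_rhs => rw [Fintype.sum_eq_add j j' hne.symm fun k hk =>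
    mul_eq_zero_of_right _ (by
      simp only [circulantRealSchurForm, of_apply, if_neg hk.1]
      rw [if_neg (fun h => hk.2 (Fin.ext (by omega)))])]
  simp only [realFourierMatrix, circulantRealSchurForm, of_apply, if_true, if_neg hne, hj',
    show 2 * m + 1 - j.1 + j.1 = 2 * m + 1 by omega]
  by_cases hjl : j.1 ≤ m
  · simp only [if_pos hjl, if_neg hj0.ne', if_neg (show ¬ (2 * m + 1 - j.1 ≤ m) by omega),
      min_eq_left (show j.1 ≤ 2 * m + 1 - j.1 by omega),
      show 2 * m + 1 - (2 * m + 1 - j.1) = j.1 by omega, sum_mul_mul_div, sum_circulant_mul_cos]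
    ring
  · simp only [if_neg hjl, if_pos (show 2 * m + 1 - j.1 ≤ m by omega),
      if_neg (show 2 * m + 1 - j.1 ≠ 0 by omega),
      min_eq_right (show 2 * m + 1 - j.1 ≤ j.1 by omega), sum_mul_mul_div, sum_circulant_mul_sin]
    ring

/-- **Real Schur form of real circulant matrices, odd order.**
For a real circulant matrix `C` of order `n = 2m+1` and the orthogonal matrix
`U = [ĉ_0, √2 ĉ_1, …, √2 ĉ_m, √2 ŝ_m, …, √2 ŝ_1]` built from the real and imaginary parts
of the columns of `F*`, the matrix `UᵀCU` is the block-structured matrix `Ω` with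
`(0,0)` entry `α_0`, diagonal entries `α_i` (for `1 ≤ i ≤ m`) and `α_{n-i}` (for `i > m`),
anti-diagonal entries `β_i` at `(i, n-i)` for `1 ≤ i ≤ m` and `-β_{n-i}` for `i > m`,
and zeros elsewhere — i.e. after permutation the direct sum of `[α_0]` and the blocks
`[[α_k, β_k], [-β_k, α_k]]`, `k = 1, …, m`, where `λ_k = α_k + iβ_k` are the eigenvalues. -/
theorem real_schur_form_circulant_odd (m : ℕ) (c : Fin (2 * m + 1) → ℝ) :
    let n : ℕ := 2 * m + 1
    let U : Matrix (Fin n) (Fin n) ℝ :=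
      Matrix.of fun j i : Fin n =>
        if (i.1 : ℕ) ≤ m then
          (if (i.1 : ℕ) = 0 then 1 else Real.sqrt 2) *
            (Real.cos (2 * Real.pi * (j.1 : ℝ) * (i.1 : ℝ) / (n : ℝ)) / Real.sqrt n)
        else
          Real.sqrt 2 *
            (Real.sin (2 * Real.pi * (j.1 : ℝ) * ((n - i.1 : ℕ) : ℝ) / (n : ℝ)) / Real.sqrt n)
    let lam : ℕ → ℂ := fun k =>
      ∑ j : Fin n,
        (c j : ℂ) * Complex.exp (-(2 * Real.pi * Complex.I * (k : ℂ) * (j.1 : ℂ) / (n : ℂ)))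
    let Ω : Matrix (Fin n) (Fin n) ℝ :=
      Matrix.of fun i j : Fin n =>
        if i = j then (lam (min i.1 (n - i.1))).re
        else if (i.1 : ℕ) + (j.1 : ℕ) = n then
          (if (i.1 : ℕ) ≤ m then (lam i.1).im else -((lam (n - i.1)).im))
        else 0
    Uᵀ * Matrix.circulant c * U = Ω := by
  show (realFourierMatrix m)ᵀ * circulant c * realFourierMatrix m = circulantRealSchurForm m c
  rw [Matrix.mul_assoc, circulant_mul_realFourierMatrix, ← Matrix.mul_assoc,
    realFourierMatrix_transpose_mul_self, Matrix.one_mul]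
end

section
/- Real Schur form of real skew-circulant matrices: for a real skew-circulant matrix S of order n = 2m, the matrix Ũ = [√2 c̃_0, …, √2 c̃_{m-1}, √2 s̃_{m-1}, …, √2 s̃_0] is orthogonal and Ũ^T S Ũ equals the matrix whose (j,j) entries are α̃_j (for the first m) and α̃_{m-1-j'} on the second half, with antidiagonal blocks ±β̃_k, i.e., after permutation it is the direct sum of 2×2 blocks [[α̃_k, β̃_k],[-β̃_k, α̃_k]] for k = 0,…,m-1. -/
/-!
With `θ_k = π (2k+1) / n`, the vector `(e^{i θ_k j})_j` is an eigenvector of every skew-circulant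
matrix of order `n`, with eigenvalue `λ̃_k`: since `e^{i θ_k n} = -1`, the sign flip of the
entries above the diagonal is exactly what cyclically shifting the powers of `e^{i θ_k}` produces.
Splitting into real and imaginary parts gives `S c̃_k = α̃_k c̃_k - β̃_k s̃_k` and
`S s̃_k = β̃_k c̃_k + α̃_k s̃_k`, i.e. `S Ũ = Ũ Σ`. The columns of `Ũ` are orthonormal by the
product-to-sum formulas, because `∑_j e^{2π i t j / n} = 0` unless `n ∣ t`, and for `k, l < m`
the frequency `k + l + 1`, and `k - l` unless `k = l`, is a nonzero integer of absolute value
less than `n`.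
-/

open Real Finset Matrix

theorem sum_cexp_two_pi_int_mul_div_eq_zero {n : ℕ} {t : ℤ} (ht : ¬ (n : ℤ) ∣ t) :
    ∑ j : Fin n, Complex.exp (2 * π * Complex.I * t * j / n) = 0 := by
  rcases eq_or_ne n 0 with rfl | hn
  · simp
  have hn' : (n : ℂ) ≠ 0 := by exact_mod_cast hn
  set z := Complex.exp (2 * π * Complex.I * t / n)
  have hpow (j : ℕ) : Complex.exp (2 * π * Complex.I * t * j / n) = z ^ j := by
    rw [← Complex.exp_nat_mul]; ring_nf
  have hz1 : z ≠ 1 := by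
    rw [Ne, Complex.exp_eq_one_iff]
    rintro ⟨k, hk⟩
    refine ht ⟨k, ?_⟩
    have : (t : ℂ) = n * k := by
      field_simp at hk
      linear_combination hk
    exact_mod_cast this
  have hzn : z ^ n = 1 := by
    rw [← hpow, mul_div_assoc, div_self hn', mul_one, ← Complex.exp_int_mul_two_pi_mul_I t]
    ring_nf
  simp only [hpow, Fin.sum_univ_eq_sum_range (z ^ ·), geom_sum_eq hz1, hzn, sub_self, zero_div]

theorem sum_cos_two_pi_int_mul_div_eq_zero {n : ℕ} {t : ℤ} (ht : ¬ (n : ℤ) ∣ t) :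
    ∑ j : Fin n, cos (2 * π * t * j / n) = 0 := by
  have h := congrArg Complex.re (sum_cexp_two_pi_int_mul_div_eq_zero ht)
  rw [Complex.re_sum, Complex.zero_re] at h
  convert h using 2 with j
  rw [← Complex.exp_ofReal_mul_I_re]
  push_cast
  ring_nf

theorem sum_sin_two_pi_int_mul_div_eq_zero (n : ℕ) (t : ℤ) :
    ∑ j : Fin n, sin (2 * π * t * j / n) = 0 := by
  by_cases ht : (n : ℤ) ∣ t
  · obtain ⟨q, rfl⟩ := ht
    refine sum_eq_zero fun j _ => ?_
    have hn : (n : ℝ) ≠ 0 := by exact_mod_cast (Fin.pos j).ne'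
    rw [show 2 * π * ((n * q : ℤ) : ℝ) * j / n = (2 * q * j : ℤ) * π by push_cast; field_simp,
      sin_int_mul_pi]
  · have h := congrArg Complex.im (sum_cexp_two_pi_int_mul_div_eq_zero ht)
    rw [Complex.im_sum, Complex.zero_im] at h
    convert h using 2 with j
    rw [← Complex.exp_ofReal_mul_I_im]
    push_cast
    ring_nf

theorem Int.not_dvd_of_ne_zero_of_abs_lt {n t : ℤ} (h0 : t ≠ 0) (hn : |t| < n) : ¬ n ∣ t :=
  fun h => h0 (Int.eq_zero_of_abs_lt_dvd h hn)

noncomputable def skewAngle (n k j : ℕ) : ℝ := π * (2 * k + 1) * j / n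

section SkewAngle

variable {n k l : ℕ}

theorem skewAngle_sub (j : ℕ) :
    skewAngle n k j - skewAngle n l j = 2 * π * ((k - l : ℤ) : ℝ) * j / n := by
  unfold skewAngle; push_cast; ring

theorem skewAngle_add (j : ℕ) :
    skewAngle n k j + skewAngle n l j = 2 * π * ((k + l + 1 : ℤ) : ℝ) * j / n := by
  unfold skewAngle; push_cast; ring

theorem sum_cos_skewAngle_sub (hkl : k + l + 1 < n) :
    ∑ j : Fin n, cos (skewAngle n k j - skewAngle n l j) = if k = l then (n : ℝ) else 0 := by
  split_ifs with h
  · simp [h]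
  · simp only [skewAngle_sub]
    exact sum_cos_two_pi_int_mul_div_eq_zero
      (Int.not_dvd_of_ne_zero_of_abs_lt (by omega) (abs_lt.mpr ⟨by omega, by omega⟩))

theorem sum_cos_skewAngle_add (hkl : k + l + 1 < n) :
    ∑ j : Fin n, cos (skewAngle n k j + skewAngle n l j) = 0 := by
  simp only [skewAngle_add]
  exact sum_cos_two_pi_int_mul_div_eq_zero
    (Int.not_dvd_of_ne_zero_of_abs_lt (by omega) (abs_lt.mpr ⟨by omega, by omega⟩))

theorem sum_cos_mul_cos_skewAngle (hkl : k + l + 1 < n) :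
    ∑ j : Fin n, cos (skewAngle n k j) * cos (skewAngle n l j) =
      if k = l then (n : ℝ) / 2 else 0 := by
  have h : 2 * ∑ j : Fin n, cos (skewAngle n k j) * cos (skewAngle n l j) =
      if k = l then (n : ℝ) else 0 := by
    simp only [mul_sum, ← mul_assoc, two_mul_cos_mul_cos, sum_add_distrib,
      sum_cos_skewAngle_sub hkl, sum_cos_skewAngle_add hkl, add_zero]
  split_ifs at h ⊢ <;> linarith

theorem sum_sin_mul_sin_skewAngle (hkl : k + l + 1 < n) :
    ∑ j : Fin n, sin (skewAngle n k j) * sin (skewAngle n l j) =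
      if k = l then (n : ℝ) / 2 else 0 := by
  have h : 2 * ∑ j : Fin n, sin (skewAngle n k j) * sin (skewAngle n l j) =
      if k = l then (n : ℝ) else 0 := by
    simp only [mul_sum, ← mul_assoc, two_mul_sin_mul_sin, sum_sub_distrib,
      sum_cos_skewAngle_sub hkl, sum_cos_skewAngle_add hkl, sub_zero]
  split_ifs at h ⊢ <;> linarith

theorem sum_sin_mul_cos_skewAngle :
    ∑ j : Fin n, sin (skewAngle n k j) * cos (skewAngle n l j) = 0 := by
  have h : 2 * ∑ j : Fin n, sin (skewAngle n k j) * cos (skewAngle n l j) = 0 := by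
    simp only [mul_sum, ← mul_assoc, two_mul_sin_mul_cos, sum_add_distrib, skewAngle_sub,
      skewAngle_add, sum_sin_two_pi_int_mul_div_eq_zero, add_zero]
  linarith

end SkewAngle

def skewCirculant {R : Type*} [Ring R] (n : ℕ) (s : ℕ → R) : Matrix (Fin n) (Fin n) R :=
  Matrix.of fun j k => if k.1 ≤ j.1 then s (j.1 - k.1) else -s (n - (k.1 - j.1))

theorem skewCirculant_map {R S : Type*} [Ring R] [Ring S] {f : R → S}
    (hf : ∀ x, f (-x) = -f x) (n : ℕ) (s : ℕ → R) :
    (skewCirculant n s).map f = skewCirculant n (f ∘ s) := by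
  ext j k
  simp only [skewCirculant, map_apply, of_apply, Function.comp_apply]
  split_ifs <;> simp [hf]

theorem skewCirculant_mulVec_pow {K : Type*} [Field K] {n : ℕ} (s : ℕ → K) {z : K}
    (hz : z ^ n = -1) :
    skewCirculant n s *ᵥ (fun j : Fin n => z ^ (j : ℕ)) =
      (∑ b : Fin n, s b * z⁻¹ ^ (b : ℕ)) • fun j : Fin n => z ^ (j : ℕ) := by
  ext j
  have : NeZero n := ⟨(Fin.pos j).ne'⟩
  have hz0 : z ≠ 0 := by rintro rfl; simp [zero_pow (NeZero.ne n)] at hz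
  simp only [mulVec, dotProduct, skewCirculant, of_apply, Pi.smul_apply, smul_eq_mul, sum_mul]
  refine (Fintype.sum_equiv (Equiv.subLeft j) _ _ fun b => ?_).symm
  rw [Equiv.subLeft_apply, inv_pow]
  by_cases hb : b ≤ j
  · rw [Fin.coe_sub_iff_le.mpr hb, if_pos (by omega), show (j : ℕ) - (j - b) = b by omega,
      pow_sub₀ z hz0 hb]
    ring
  · rw [Fin.coe_sub_iff_lt.mpr (not_le.mp hb), if_neg (by omega),
      show n - (n + j - b - j) = b by omega, show n + (j : ℕ) - b = (n - b) + j by omega,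
      pow_add, pow_sub₀ z hz0 (by omega), hz]
    ring

noncomputable def skewEigenvalue (n : ℕ) (s : ℕ → ℝ) (k : ℕ) : ℂ :=
  ∑ j : Fin n, (s j.1 : ℂ) *
    Complex.exp (-(Real.pi * Complex.I * (2 * (k : ℂ) + 1) * (j.1 : ℂ) / (n : ℂ)))

section SkewEigenvector

variable {n : ℕ} (s : ℕ → ℝ) (k : ℕ)

theorem skewCirculant_mulVec_cexp_skewAngle :
    (skewCirculant n s).map (↑) *ᵥ (fun j : Fin n => Complex.exp (skewAngle n k j * Complex.I)) =
      skewEigenvalue n s k • fun j : Fin n => Complex.exp (skewAngle n k j * Complex.I) := by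
  rcases eq_or_ne n 0 with rfl | hn
  · exact Subsingleton.elim _ _
  set z := Complex.exp (π * Complex.I * (2 * k + 1) / n)
  have hpow (j : ℕ) : Complex.exp (skewAngle n k j * Complex.I) = z ^ j := by
    rw [← Complex.exp_nat_mul, skewAngle]; push_cast; ring_nf
  have hz : z ^ n = -1 := by
    have : skewAngle n k n = (2 * k + 1 : ℕ) * π := by
      rw [skewAngle]; push_cast; field_simp
    rw [← hpow, this, Complex.ofReal_mul, Complex.ofReal_natCast, mul_assoc, Complex.exp_nat_mul,
      Complex.exp_pi_mul_I, Odd.neg_one_pow (odd_two_mul_add_one k)]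
  have hinv (j : ℕ) : Complex.exp (-(π * Complex.I * (2 * (k : ℂ) + 1) * j / n)) = z⁻¹ ^ j := by
    rw [inv_pow, ← Complex.exp_nat_mul, ← Complex.exp_neg]; ring_nf
  rw [skewCirculant_map Complex.ofReal_neg]
  simp only [hpow, skewEigenvalue, hinv]
  exact skewCirculant_mulVec_pow _ hz

theorem skewCirculant_mulVec_cos_skewAngle :
    skewCirculant n s *ᵥ (fun j : Fin n => cos (skewAngle n k j)) = fun j : Fin n =>
      (skewEigenvalue n s k).re * cos (skewAngle n k j) -
        (skewEigenvalue n s k).im * sin (skewAngle n k j) := by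
  ext j
  have h := congrArg Complex.re (congrFun (skewCirculant_mulVec_cexp_skewAngle s k) j)
  simpa [mulVec, dotProduct, Complex.re_sum, Complex.exp_ofReal_mul_I_re,
    Complex.exp_ofReal_mul_I_im] using h

theorem skewCirculant_mulVec_sin_skewAngle :
    skewCirculant n s *ᵥ (fun j : Fin n => sin (skewAngle n k j)) = fun j : Fin n =>
      (skewEigenvalue n s k).im * cos (skewAngle n k j) +
        (skewEigenvalue n s k).re * sin (skewAngle n k j) := by
  ext j
  have h := congrArg Complex.im (congrFun (skewCirculant_mulVec_cexp_skewAngle s k) j)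
  simpa [mulVec, dotProduct, Complex.im_sum, Complex.exp_ofReal_mul_I_re,
    Complex.exp_ofReal_mul_I_im, add_comm] using h

end SkewEigenvector

-- Columns `i` and `Fin.rev i` hold the unnormalized pair `c̃_k, s̃_k` with `k = min i (n - 1 - i)`.
noncomputable def skewTrigBasis (m : ℕ) : Matrix (Fin (2 * m)) (Fin (2 * m)) ℝ :=
  Matrix.of fun j i =>
    if i.1 < m then cos (skewAngle (2 * m) i j) else sin (skewAngle (2 * m) (2 * m - 1 - i) j)

noncomputable def skewSchurBasis (m : ℕ) : Matrix (Fin (2 * m)) (Fin (2 * m)) ℝ :=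
  Matrix.of fun j i =>
    if i.1 < m then √2 * (cos (skewAngle (2 * m) i j) / √((2 * m : ℕ) : ℝ))
    else √2 * (sin (skewAngle (2 * m) (2 * m - 1 - i) j) / √((2 * m : ℕ) : ℝ))

noncomputable def skewSchurForm (m : ℕ) (s : ℕ → ℝ) : Matrix (Fin (2 * m)) (Fin (2 * m)) ℝ :=
  Matrix.of fun i j =>
    if i = j then (skewEigenvalue (2 * m) s (min i.1 (2 * m - 1 - i.1))).re
    else if i.1 + j.1 = 2 * m - 1 then
      (if i.1 < m then (skewEigenvalue (2 * m) s i.1).im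
        else -(skewEigenvalue (2 * m) s (2 * m - 1 - i.1)).im)
    else 0

section SkewSchurBasis

variable (m : ℕ) (s : ℕ → ℝ)

theorem skewSchurBasis_eq_smul :
    skewSchurBasis m = (√2 / √((2 * m : ℕ) : ℝ)) • skewTrigBasis m := by
  ext j i
  simp only [skewSchurBasis, skewTrigBasis, of_apply, Matrix.smul_apply, smul_eq_mul]
  split_ifs <;> ring

theorem skewTrigBasis_transpose_mul_self :
    (skewTrigBasis m)ᵀ * skewTrigBasis m = (m : ℝ) • 1 := by
  ext i i'
  have hi := i.isLt
  have hi' := i'.isLt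
  have hval : (i : ℕ) = i' ↔ i = i' := Fin.val_inj
  have hhalf : ((2 * m : ℕ) : ℝ) / 2 = m := by push_cast; ring
  simp only [mul_apply, transpose_apply, skewTrigBasis, of_apply, Matrix.smul_apply, one_apply,
    smul_eq_mul, mul_ite, mul_one, mul_zero]
  by_cases h : (i : ℕ) < m <;> by_cases h' : (i' : ℕ) < m <;> simp only [h, h', if_true, if_false]
  · rw [sum_cos_mul_cos_skewAngle (by omega), hhalf]
    simp only [hval]
  · simp_rw [mul_comm (cos _)]
    rw [sum_sin_mul_cos_skewAngle, if_neg (by rintro rfl; exact h' h)]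
  · rw [sum_sin_mul_cos_skewAngle, if_neg (by rintro rfl; exact h h')]
  · rw [sum_sin_mul_sin_skewAngle (by omega), hhalf]
    simp only [show 2 * m - 1 - (i : ℕ) = 2 * m - 1 - i' ↔ i = i' by omega]

theorem skewSchurBasis_transpose_mul_self :
    (skewSchurBasis m)ᵀ * skewSchurBasis m = 1 := by
  rcases eq_or_ne m 0 with rfl | hm
  · ext i; exact absurd i.isLt (by simp)
  rw [skewSchurBasis_eq_smul, transpose_smul, smul_mul_smul_comm,
    skewTrigBasis_transpose_mul_self, smul_smul, div_mul_div_comm, Real.mul_self_sqrt two_pos.le,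
    Real.mul_self_sqrt (Nat.cast_nonneg _)]
  push_cast
  field_simp
  exact one_smul _ _

theorem skewTrigBasis_mul_skewSchurForm_apply (j i : Fin (2 * m)) :
    (skewTrigBasis m * skewSchurForm m s) j i =
      skewTrigBasis m j i * skewSchurForm m s i i +
        skewTrigBasis m j i.rev * skewSchurForm m s i.rev i := by
  have hrev : (i.rev : ℕ) = 2 * m - 1 - i := by rw [Fin.val_rev]; omega
  refine Fintype.sum_eq_add i i.rev (fun h => ?_) fun a ⟨ha, ha'⟩ => ?_
  · have := congrArg Fin.val h; omega
  · have hsum : (a : ℕ) + i ≠ 2 * m - 1 := fun h => ha' (Fin.ext (by omega))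
    simp only [skewSchurForm, of_apply, ha, hsum, if_false, mul_zero]

theorem skewCirculant_mul_skewTrigBasis :
    skewCirculant (2 * m) s * skewTrigBasis m = skewTrigBasis m * skewSchurForm m s := by
  ext j i
  rw [skewTrigBasis_mul_skewSchurForm_apply]
  have hrev : (i.rev : ℕ) = 2 * m - 1 - i := by rw [Fin.val_rev]; omega
  have hrev_ne : i.rev ≠ i := fun h => by have := congrArg Fin.val h; omega
  have hsum : 2 * m - 1 - (i : ℕ) + i = 2 * m - 1 := by omega
  by_cases hi : (i : ℕ) < m
  · have hcol : (fun a => skewTrigBasis m a i) = fun a : Fin (2 * m) =>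
        cos (skewAngle (2 * m) i a) := by
      ext a; simp only [skewTrigBasis, of_apply, hi, if_true]
    have hmin : min (i : ℕ) (2 * m - 1 - i) = i := by omega
    have hrev_ge : ¬ 2 * m - 1 - (i : ℕ) < m := by omega
    have hrev_rev : 2 * m - 1 - (2 * m - 1 - (i : ℕ)) = i := by omega
    have := congrFun (skewCirculant_mulVec_cos_skewAngle s i) j
    rw [← hcol] at this
    refine this.trans ?_
    simp only [skewTrigBasis, skewSchurForm, of_apply, hi, hrev, hrev_ne, hmin, hrev_ge, hsum,
      hrev_rev, if_true, if_false]
    ring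
  · have hcol : (fun a => skewTrigBasis m a i) = fun a : Fin (2 * m) =>
        sin (skewAngle (2 * m) (2 * m - 1 - i) a) := by
      ext a; simp only [skewTrigBasis, of_apply, hi, if_false]
    have hmin : min (i : ℕ) (2 * m - 1 - i) = 2 * m - 1 - i := by omega
    have hrev_lt : 2 * m - 1 - (i : ℕ) < m := by omega
    have := congrFun (skewCirculant_mulVec_sin_skewAngle s (2 * m - 1 - i)) j
    rw [← hcol] at this
    refine this.trans ?_
    simp only [skewTrigBasis, skewSchurForm, of_apply, hi, hrev, hrev_ne, hmin, hrev_lt, hsum,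
      if_true, if_false]
    ring

end SkewSchurBasis

theorem real_schur_form_skew_circulant_even_general (m : ℕ) (s : ℕ → ℝ) :
    let n : ℕ := 2 * m
    let S : Matrix (Fin n) (Fin n) ℝ :=
      Matrix.of fun j k : Fin n =>
        if (k.1 : ℕ) ≤ j.1 then s (j.1 - k.1) else -s (n - (k.1 - j.1))
    let lam : ℕ → ℂ := fun k =>
      ∑ j : Fin n,
        (s j.1 : ℂ) *
          Complex.exp (-(Real.pi * Complex.I * (2 * (k : ℂ) + 1) * (j.1 : ℂ) / (n : ℂ)))
    let Ut : Matrix (Fin n) (Fin n) ℝ :=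
      Matrix.of fun j i : Fin n =>
        if (i.1 : ℕ) < m then
          Real.sqrt 2 *
            (Real.cos (Real.pi * (2 * (i.1 : ℝ) + 1) * (j.1 : ℝ) / (n : ℝ)) / Real.sqrt n)
        else
          Real.sqrt 2 *
            (Real.sin (Real.pi * (2 * ((n - 1 - i.1 : ℕ) : ℝ) + 1) * (j.1 : ℝ) / (n : ℝ)) /
              Real.sqrt n)
    let Sig : Matrix (Fin n) (Fin n) ℝ :=
      Matrix.of fun i j : Fin n =>
        if i = j then (lam (min i.1 (n - 1 - i.1))).re
        else if (i.1 : ℕ) + (j.1 : ℕ) = n - 1 then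
          (if (i.1 : ℕ) < m then (lam i.1).im else -((lam (n - 1 - i.1)).im))
        else 0
    Utᵀ * Ut = 1 ∧ Ut * Utᵀ = 1 ∧ Utᵀ * S * Ut = Sig := by
  intro n S lam Ut Sig
  have horth : Utᵀ * Ut = 1 := skewSchurBasis_transpose_mul_self m
  have hcomm : S * Ut = Ut * Sig := by
    change skewCirculant (2 * m) s * skewSchurBasis m = skewSchurBasis m * skewSchurForm m s
    rw [skewSchurBasis_eq_smul, mul_smul_comm, smul_mul_assoc, skewCirculant_mul_skewTrigBasis]
  refine ⟨horth, mul_eq_one_comm.mp horth, ?_⟩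
  rw [Matrix.mul_assoc, hcomm, ← Matrix.mul_assoc, horth, Matrix.one_mul]

/-- **Real Schur form of real skew-circulant matrices, even order.**
For a real skew-circulant matrix `S` of order `n = 2m`, the matrix
`Ũ = [√2 c̃_0, …, √2 c̃_{m-1}, √2 s̃_{m-1}, …, √2 s̃_0]` (with
`c̃_k j = cos(π(2k+1)j/n)/√n`, `s̃_k j = sin(π(2k+1)j/n)/√n`) is orthogonal and
`Ũᵀ S Ũ = Σ` where `Σ` has diagonal entries `α̃_i` (first half) and `α̃_{n-1-i}`
(second half), anti-diagonal entries `β̃_i` at `(i, n-1-i)` for `i < m` and `-β̃_{n-1-i}`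
for `i ≥ m`, and zeros elsewhere — i.e. after permutation the direct sum of the
`2 × 2` blocks `[[α̃_k, β̃_k], [-β̃_k, α̃_k]]`, `k = 0, …, m-1`, where
`λ̃_k = α̃_k + iβ̃_k = ∑_j s_j exp(-iπ(2k+1)j/n)` are the eigenvalues of `S`. -/
theorem real_schur_form_skew_circulant_even (m : ℕ) (hm : 0 < m) (s : ℕ → ℝ) :
    let n : ℕ := 2 * m
    let S : Matrix (Fin n) (Fin n) ℝ :=
      Matrix.of fun j k : Fin n =>
        if (k.1 : ℕ) ≤ j.1 then s (j.1 - k.1) else -s (n - (k.1 - j.1))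
    let lam : ℕ → ℂ := fun k =>
      ∑ j : Fin n,
        (s j.1 : ℂ) *
          Complex.exp (-(Real.pi * Complex.I * (2 * (k : ℂ) + 1) * (j.1 : ℂ) / (n : ℂ)))
    let Ut : Matrix (Fin n) (Fin n) ℝ :=
      Matrix.of fun j i : Fin n =>
        if (i.1 : ℕ) < m then
          Real.sqrt 2 *
            (Real.cos (Real.pi * (2 * (i.1 : ℝ) + 1) * (j.1 : ℝ) / (n : ℝ)) / Real.sqrt n)
        else
          Real.sqrt 2 *
            (Real.sin (Real.pi * (2 * ((n - 1 - i.1 : ℕ) : ℝ) + 1) * (j.1 : ℝ) / (n : ℝ)) /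
              Real.sqrt n)
    let Sig : Matrix (Fin n) (Fin n) ℝ :=
      Matrix.of fun i j : Fin n =>
        if i = j then (lam (min i.1 (n - 1 - i.1))).re
        else if (i.1 : ℕ) + (j.1 : ℕ) = n - 1 then
          (if (i.1 : ℕ) < m then (lam i.1).im else -((lam (n - 1 - i.1)).im))
        else 0
    Utᵀ * Ut = 1 ∧ Ut * Utᵀ = 1 ∧ Utᵀ * S * Ut = Sig :=
  real_schur_form_skew_circulant_even_general m s
end

section
/- Suppose the real circulant matrix C and the real skew-circulant matrix S from the CSCS splitting T = C + S are both positive definite. Then for any θ > 0, both θI + C and θI + S are invertible, and the CSCS iteration matrix M(θ) = (θI + S)^{-1}(θI − C)(θI + C)^{-1}(θI − S) has spectral radius strictly less than 1. -/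
/-! If `re ⟪u, v⟫ ≥ 0` then `‖u - v‖ ≤ ‖u + v‖`, strictly if `re ⟪u, v⟫ > 0`; for `θ > 0`, a
real matrix `A` with positive definite symmetric part gives `re ⟪θy, Ay⟫ > 0` for every nonzero
complex vector `y`. If `M(θ) x = μ x` with `x ≠ 0`, the half-step `y = (θI + C)⁻¹ (θI - S) x`
satisfies `(θI + C) y = (θI - S) x` and `(θI - C) y = μ (θI + S) x`, so
`‖μ‖ ‖(θI + S) x‖ = ‖(θI - C) y‖ ≤ ‖(θI + C) y‖ = ‖(θI - S) x‖ < ‖(θI + S) x‖`. -/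

open Matrix

open RCLike
open scoped InnerProductSpace

section Cayley

variable {𝕜 E : Type*} [RCLike 𝕜] [NormedAddCommGroup E] [InnerProductSpace 𝕜 E]

theorem norm_sub_le_norm_add_of_re_inner_nonneg {u v : E} (h : 0 ≤ re ⟪u, v⟫_𝕜) :
    ‖u - v‖ ≤ ‖u + v‖ := by
  rw [← sq_le_sq₀ (norm_nonneg _) (norm_nonneg _), norm_sub_sq (𝕜 := 𝕜), norm_add_sq (𝕜 := 𝕜)]
  linarith

theorem norm_sub_lt_norm_add_of_re_inner_pos {u v : E} (h : 0 < re ⟪u, v⟫_𝕜) :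
    ‖u - v‖ < ‖u + v‖ := by
  rw [← sq_lt_sq₀ (norm_nonneg _) (norm_nonneg _), norm_sub_sq (𝕜 := 𝕜), norm_add_sq (𝕜 := 𝕜)]
  linarith

theorem norm_lt_one_of_add_eq_sub_of_sub_eq_smul_add {u v w z : E} {μ : 𝕜}
    (huv : 0 ≤ re ⟪u, v⟫_𝕜) (hwz : 0 < re ⟪w, z⟫_𝕜)
    (hadd : u + v = w - z) (hsub : u - v = μ • (w + z)) : ‖μ‖ < 1 := by
  have hlt : ‖w - z‖ < ‖w + z‖ := norm_sub_lt_norm_add_of_re_inner_pos hwz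
  have hle : ‖μ‖ * ‖w + z‖ ≤ ‖w - z‖ :=
    calc ‖μ‖ * ‖w + z‖ = ‖u - v‖ := by rw [hsub, norm_smul]
      _ ≤ ‖u + v‖ := norm_sub_le_norm_add_of_re_inner_nonneg huv
      _ = ‖w - z‖ := by rw [hadd]
  exact (mul_lt_iff_lt_one_left ((norm_nonneg _).trans_lt hlt)).mp (hle.trans_lt hlt)

end Cayley

section Matrix

variable {n : Type*} [Fintype n]

theorem Matrix.dotProduct_mulVec_self_nonneg {R : Type*} [Semiring R] [PartialOrder R]
    {A : Matrix n n R} (hA : ∀ x ≠ 0, 0 < x ⬝ᵥ A *ᵥ x) (x : n → R) : 0 ≤ x ⬝ᵥ A *ᵥ x := by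
  rcases eq_or_ne x 0 with rfl | hx
  · simp
  · exact (hA x hx).le

variable [DecidableEq n]

theorem Matrix.exists_mulVec_eq_smul_of_mem_spectrum {K : Type*} [Field K] {M : Matrix n n K}
    {μ : K} (hμ : μ ∈ spectrum K M) : ∃ x ≠ 0, M *ᵥ x = μ • x := by
  rw [← spectrum_toLin', ← Module.End.hasEigenvalue_iff_mem_spectrum] at hμ
  obtain ⟨x, hx⟩ := hμ.exists_hasEigenvector
  exact ⟨x, hx.2, by simpa using hx.apply_eq_smul⟩

theorem Matrix.isUnit_of_forall_dotProduct_mulVec_pos {R : Type*} [Field R] [Preorder R]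
    {B : Matrix n n R} (hB : ∀ x ≠ 0, 0 < x ⬝ᵥ B *ᵥ x) : IsUnit B := by
  rw [isUnit_iff_isUnit_det, isUnit_iff_ne_zero]
  intro hdet
  obtain ⟨v, hv0, hv⟩ := exists_mulVec_eq_zero_iff.mpr hdet
  simpa [hv] using hB v hv0

theorem Matrix.isUnit_smul_one_add {R : Type*} [Field R] [LinearOrder R] [IsStrictOrderedRing R]
    {A : Matrix n n R} (hA : ∀ x ≠ 0, 0 < x ⬝ᵥ A *ᵥ x) {θ : R} (hθ : 0 ≤ θ) :
    IsUnit (θ • 1 + A) := by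
  refine isUnit_of_forall_dotProduct_mulVec_pos fun x hx => ?_
  have hxx : 0 ≤ x ⬝ᵥ x := Finset.sum_nonneg fun i _ => mul_self_nonneg (x i)
  rw [add_mulVec, smul_mulVec, one_mulVec, dotProduct_add, dotProduct_smul, smul_eq_mul]
  nlinarith [hA x hx]

theorem Matrix.re_map_ofReal_mulVec (A : Matrix n n ℝ) (y : n → ℂ) (i : n) :
    ((Complex.ofRealHom.mapMatrix A *ᵥ y) i).re = (A *ᵥ fun j => (y j).re) i := by
  simp [mulVec, dotProduct, Complex.re_sum]

theorem Matrix.im_map_ofReal_mulVec (A : Matrix n n ℝ) (y : n → ℂ) (i : n) :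
    ((Complex.ofRealHom.mapMatrix A *ᵥ y) i).im = (A *ᵥ fun j => (y j).im) i := by
  simp [mulVec, dotProduct, Complex.im_sum]

theorem Matrix.re_inner_map_ofReal_mulVec (A : Matrix n n ℝ) (y : n → ℂ) :
    (⟪WithLp.toLp 2 y, WithLp.toLp 2 (Complex.ofRealHom.mapMatrix A *ᵥ y)⟫_ℂ).re =
      (fun i => (y i).re) ⬝ᵥ A *ᵥ (fun i => (y i).re) +
        (fun i => (y i).im) ⬝ᵥ A *ᵥ (fun i => (y i).im) := by
  simp only [EuclideanSpace.inner_toLp_toLp, dotProduct, Complex.re_sum,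
    ← Finset.sum_add_distrib, Pi.star_apply, Complex.star_def, Complex.mul_re, Complex.conj_re,
    Complex.conj_im, re_map_ofReal_mulVec, im_map_ofReal_mulVec]
  exact Finset.sum_congr rfl fun i _ => by ring

theorem RingHom.mapMatrix_smul_one_add_mulVec {R S : Type*} [CommRing R] [CommRing S]
    (f : R →+* S) (r : R) (A : Matrix n n R) (y : n → S) :
    f.mapMatrix (r • 1 + A) *ᵥ y = f r • y + f.mapMatrix A *ᵥ y := by
  rw [map_add, add_mulVec, RingHom.mapMatrix_apply, map_smul' _ _ _ (map_mul f),
    Matrix.map_one _ f.map_zero f.map_one, smul_mulVec, one_mulVec]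

theorem RingHom.mapMatrix_smul_one_sub_mulVec {R S : Type*} [CommRing R] [CommRing S]
    (f : R →+* S) (r : R) (A : Matrix n n R) (y : n → S) :
    f.mapMatrix (r • 1 - A) *ᵥ y = f r • y - f.mapMatrix A *ᵥ y := by
  rw [map_sub, sub_mulVec, RingHom.mapMatrix_apply, map_smul' _ _ _ (map_mul f),
    Matrix.map_one _ f.map_zero f.map_one, smul_mulVec, one_mulVec]

theorem Matrix.exists_halfStep_of_mulVec_eq_smul {R S : Type*} [CommRing R] [CommRing S]
    (f : R →+* S) {P P' Q Q' : Matrix n n R} (hP : IsUnit P) (hQ : IsUnit Q) {x : n → S} {μ : S}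
    (hx : f.mapMatrix (Q⁻¹ * P' * P⁻¹ * Q') *ᵥ x = μ • x) :
    ∃ y, f.mapMatrix P *ᵥ y = f.mapMatrix Q' *ᵥ x ∧
      f.mapMatrix P' *ᵥ y = μ • f.mapMatrix Q *ᵥ x := by
  have hPP : P * P⁻¹ = 1 := mul_nonsing_inv P ((isUnit_iff_isUnit_det P).mp hP)
  have hQQ : Q * Q⁻¹ = 1 := mul_nonsing_inv Q ((isUnit_iff_isUnit_det Q).mp hQ)
  refine ⟨f.mapMatrix (P⁻¹ * Q') *ᵥ x, ?_, ?_⟩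
  · rw [mulVec_mulVec, ← map_mul, ← Matrix.mul_assoc, hPP, Matrix.one_mul]
  · rw [mulVec_mulVec, ← map_mul, ← mulVec_smul, ← hx, mulVec_mulVec, ← map_mul]
    simp only [← Matrix.mul_assoc, hQQ, Matrix.one_mul]

theorem Matrix.re_inner_smul_ofReal_mapMatrix_mulVec_nonneg {A : Matrix n n ℝ}
    (hA : ∀ x ≠ 0, 0 < x ⬝ᵥ A *ᵥ x) {θ : ℝ} (hθ : 0 ≤ θ) (y : n → ℂ) :
    0 ≤ (⟪(θ : ℂ) • WithLp.toLp 2 y, WithLp.toLp 2 (Complex.ofRealHom.mapMatrix A *ᵥ y)⟫_ℂ).re := by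
  rw [inner_smul_left, Complex.conj_ofReal, Complex.re_ofReal_mul, re_inner_map_ofReal_mulVec]
  exact mul_nonneg hθ (add_nonneg (dotProduct_mulVec_self_nonneg hA _)
    (dotProduct_mulVec_self_nonneg hA _))

theorem Matrix.re_inner_smul_ofReal_mapMatrix_mulVec_pos {A : Matrix n n ℝ}
    (hA : ∀ x ≠ 0, 0 < x ⬝ᵥ A *ᵥ x) {θ : ℝ} (hθ : 0 < θ) {y : n → ℂ} (hy : y ≠ 0) :
    0 < (⟪(θ : ℂ) • WithLp.toLp 2 y, WithLp.toLp 2 (Complex.ofRealHom.mapMatrix A *ᵥ y)⟫_ℂ).re := by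
  have hreim : (fun i => (y i).re) ≠ 0 ∨ (fun i => (y i).im) ≠ 0 := by
    by_contra! h
    exact hy (funext fun i => Complex.ext (congrFun h.1 i) (congrFun h.2 i))
  rw [inner_smul_left, Complex.conj_ofReal, Complex.re_ofReal_mul, re_inner_map_ofReal_mulVec]
  refine mul_pos hθ ?_
  rcases hreim with h | h
  · exact add_pos_of_pos_of_nonneg (hA _ h) (dotProduct_mulVec_self_nonneg hA _)
  · exact add_pos_of_nonneg_of_pos (dotProduct_mulVec_self_nonneg hA _) (hA _ h)

end Matrix

theorem cscs_iteration_converges_general (n : ℕ)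
    (C S : Matrix (Fin n) (Fin n) ℝ)
    (hCpd : ∀ x : Fin n → ℝ, x ≠ 0 → 0 < x ⬝ᵥ C.mulVec x)
    (hSpd : ∀ x : Fin n → ℝ, x ≠ 0 → 0 < x ⬝ᵥ S.mulVec x)
    (θ : ℝ) (hθ : 0 < θ) :
    IsUnit (θ • (1 : Matrix (Fin n) (Fin n) ℝ) + C) ∧
      IsUnit (θ • (1 : Matrix (Fin n) (Fin n) ℝ) + S) ∧
      ∀ μ ∈ spectrum ℂ
          ((((θ • (1 : Matrix (Fin n) (Fin n) ℝ) + S)⁻¹ *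
              (θ • (1 : Matrix (Fin n) (Fin n) ℝ) - C) *
              (θ • (1 : Matrix (Fin n) (Fin n) ℝ) + C)⁻¹ *
              (θ • (1 : Matrix (Fin n) (Fin n) ℝ) - S)).map (fun x => (x : ℂ)))),
        ‖μ‖ < 1 := by
  have hCu := isUnit_smul_one_add hCpd hθ.le
  have hSu := isUnit_smul_one_add hSpd hθ.le
  refine ⟨hCu, hSu, fun μ hμ => ?_⟩
  obtain ⟨x, hx0, hx⟩ := exists_mulVec_eq_smul_of_mem_spectrum hμ
  obtain ⟨y, hadd, hsub⟩ := exists_halfStep_of_mulVec_eq_smul Complex.ofRealHom hCu hSu hx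
  rw [RingHom.mapMatrix_smul_one_add_mulVec, RingHom.mapMatrix_smul_one_sub_mulVec] at hadd hsub
  refine norm_lt_one_of_add_eq_sub_of_sub_eq_smul_add
    (re_inner_smul_ofReal_mapMatrix_mulVec_nonneg hCpd hθ.le y)
    (re_inner_smul_ofReal_mapMatrix_mulVec_pos hSpd hθ hx0) ?_ ?_
  · simpa using congrArg (WithLp.toLp 2) hadd
  · simpa using congrArg (WithLp.toLp 2) hsub

/-- If in the CSCS splitting `T = C + S` both the circulant part `C`
and the skew-circulant part `S` are positive definite (i.e. `xᵀ C x > 0` and `xᵀ S x > 0`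
for all `x ≠ 0`), then for any `θ > 0` the matrices `θI + C` and `θI + S` are invertible
and the CSCS iteration matrix `M(θ) = (θI+S)⁻¹ (θI−C) (θI+C)⁻¹ (θI−S)` has spectral
radius strictly less than `1`: every eigenvalue `μ ∈ spectrum ℂ` of `M(θ)` has `‖μ‖ < 1`. -/
theorem cscs_iteration_converges (n : ℕ) (hn : 0 < n)
    (C S : Matrix (Fin n) (Fin n) ℝ)
    (hC : IsCirculantR n C) (hS : IsSkewCirculantR n S)
    (hCpd : ∀ x : Fin n → ℝ, x ≠ 0 → 0 < x ⬝ᵥ C.mulVec x)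
    (hSpd : ∀ x : Fin n → ℝ, x ≠ 0 → 0 < x ⬝ᵥ S.mulVec x)
    (θ : ℝ) (hθ : 0 < θ) :
    IsUnit (θ • (1 : Matrix (Fin n) (Fin n) ℝ) + C) ∧
      IsUnit (θ • (1 : Matrix (Fin n) (Fin n) ℝ) + S) ∧
      ∀ μ ∈ spectrum ℂ
          ((((θ • (1 : Matrix (Fin n) (Fin n) ℝ) + S)⁻¹ *
              (θ • (1 : Matrix (Fin n) (Fin n) ℝ) - C) *
              (θ • (1 : Matrix (Fin n) (Fin n) ℝ) + C)⁻¹ *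
              (θ • (1 : Matrix (Fin n) (Fin n) ℝ) - S)).map (fun x => (x : ℂ)))),
        ‖μ‖ < 1 :=
  cscs_iteration_converges_general n C S hCpd hSpd θ hθ
end
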